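/- arXiv:1401.1708 — 3 statements merged into one kernel-verified Lean document; each statement's English description precedes it below -/
import Mathlib

section
/- A bivector field π on M is foliated if and only if for every function H ∈ C^∞(M), the image of (L_{X_H} π)^# is contained in the image of π^# (as maps on 1-forms: for every 1-form α there exists a 1-form β with (L_{X_H} π)^#(α) = π^#(β)). -/
open Matrix

noncomputable def lieBracketVF {n : ℕ} (X Y : (Fin n → ℝ) → (Fin n → ℝ)) :
    (Fin n → ℝ) → (Fin n → ℝ) :=
  fun m => fderiv ℝ Y m (X m) - fderiv ℝ X m (Y m)

noncomputable def gradf {n : ℕ} (F : (Fin n → ℝ) → ℝ) (m : Fin n → ℝ) : Fin n → ℝ :=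
  fun i => fderiv ℝ F m (Pi.single i 1)

noncomputable def ham {n : ℕ} (π : (Fin n → ℝ) → Matrix (Fin n) (Fin n) ℝ)
    (F : (Fin n → ℝ) → ℝ) : (Fin n → ℝ) → (Fin n → ℝ) :=
  fun m => π m *ᵥ gradf F m

def SmoothBiv {n : ℕ} (π : (Fin n → ℝ) → Matrix (Fin n) (Fin n) ℝ) : Prop :=
  ∀ i j, ContDiff ℝ (⊤ : ℕ∞) fun m => π m i j

def AntiSymmBiv {n : ℕ} (π : (Fin n → ℝ) → Matrix (Fin n) (Fin n) ℝ) : Prop :=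
  ∀ m, (π m)ᵀ = -π m

def Foliated {n : ℕ} (π : (Fin n → ℝ) → Matrix (Fin n) (Fin n) ℝ) : Prop :=
  ∀ α β : (Fin n → ℝ) → (Fin n → ℝ), ContDiff ℝ (⊤ : ℕ∞) α → ContDiff ℝ (⊤ : ℕ∞) β →
    ∃ γ : (Fin n → ℝ) → (Fin n → ℝ), ContDiff ℝ (⊤ : ℕ∞) γ ∧
      ∀ m, lieBracketVF (fun p => π p *ᵥ α p) (fun p => π p *ᵥ β p) m = π m *ᵥ γ m

def WeaklyFoliated {n : ℕ} (π : (Fin n → ℝ) → Matrix (Fin n) (Fin n) ℝ) : Prop :=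
  ∀ α β : (Fin n → ℝ) → (Fin n → ℝ), ContDiff ℝ (⊤ : ℕ∞) α → ContDiff ℝ (⊤ : ℕ∞) β →
    ∀ m, ∃ ξ : Fin n → ℝ,
      lieBracketVF (fun p => π p *ᵥ α p) (fun p => π p *ᵥ β p) m = π m *ᵥ ξ

noncomputable def pd {n : ℕ} (f : (Fin n → ℝ) → ℝ) (l : Fin n) (m : Fin n → ℝ) : ℝ :=
  fderiv ℝ f m (Pi.single l 1)

noncomputable def schouten {n : ℕ} (π : (Fin n → ℝ) → Matrix (Fin n) (Fin n) ℝ)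
    (m : Fin n → ℝ) (i j k : Fin n) : ℝ :=
  ∑ l, (π m l i * pd (fun p => π p j k) l m + π m l j * pd (fun p => π p k i) l m
      + π m l k * pd (fun p => π p i j) l m)

noncomputable def pb {n : ℕ} (π : (Fin n → ℝ) → Matrix (Fin n) (Fin n) ℝ)
    (F G : (Fin n → ℝ) → ℝ) (m : Fin n → ℝ) : ℝ :=
  dotProduct (gradf G m) (π m *ᵥ gradf F m)

noncomputable def jacobianM {n : ℕ} (X : (Fin n → ℝ) → (Fin n → ℝ)) (m : Fin n → ℝ) :
    Matrix (Fin n) (Fin n) ℝ :=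
  Matrix.of fun i l => fderiv ℝ (fun p => X p i) m (Pi.single l 1)

noncomputable def lieDerivBiv {n : ℕ} (X : (Fin n → ℝ) → (Fin n → ℝ))
    (π : (Fin n → ℝ) → Matrix (Fin n) (Fin n) ℝ) (m : Fin n → ℝ) :
    Matrix (Fin n) (Fin n) ℝ :=
  (Matrix.of fun i j => fderiv ℝ (fun p => π p i j) m (X m))
    - jacobianM X m * π m - π m * (jacobianM X m)ᵀ

/-
The Leibniz rule `[X, π♯β] = (L_X π)♯β + π♯(L_X β)` gives both directions. For the Hamiltonian
field `X_H = π♯ dH` it says that `[π♯ dH, π♯ α]` and `(L_{X_H} π)♯α` differ by an element of the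
image of `π♯`, so foliation gives the image condition. Conversely, `π♯α = ∑ⱼ αⱼ X_{xⱼ}` is a
combination of the Hamiltonian fields of the coordinate functions, and
`L_{π♯α} π = ∑ⱼ αⱼ L_{X_{xⱼ}} π` up to a term whose image lies in that of `π♯`, so the image
condition for the coordinate functions `H = xⱼ` makes `[π♯α, π♯β]` lie in the image of `π♯`.
-/

open scoped ContDiff

section

variable {n : ℕ} {m : Fin n → ℝ}

noncomputable def lieDerivForm (X β : (Fin n → ℝ) → (Fin n → ℝ)) (m : Fin n → ℝ) :
    Fin n → ℝ :=
  fderiv ℝ β m (X m) + (jacobianM X m)ᵀ *ᵥ β m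

lemma jacobianM_eq_toMatrix' {X : (Fin n → ℝ) → (Fin n → ℝ)} (hX : DifferentiableAt ℝ X m) :
    jacobianM X m = LinearMap.toMatrix' (fderiv ℝ X m : (Fin n → ℝ) →ₗ[ℝ] (Fin n → ℝ)) := by
  ext i l
  simp [jacobianM, LinearMap.toMatrix'_apply, fderiv_apply hX]

lemma fderiv_apply_eq_jacobianM_mulVec {X : (Fin n → ℝ) → (Fin n → ℝ)}
    (hX : DifferentiableAt ℝ X m) (v : Fin n → ℝ) :
    fderiv ℝ X m v = jacobianM X m *ᵥ v := by
  rw [jacobianM_eq_toMatrix' hX, LinearMap.toMatrix'_mulVec]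
  rfl

lemma hasFDerivAt_mulVec {A : (Fin n → ℝ) → Matrix (Fin n) (Fin n) ℝ}
    {β : (Fin n → ℝ) → (Fin n → ℝ)} (hA : ∀ i j, DifferentiableAt ℝ (fun p => A p i j) m)
    (hβ : DifferentiableAt ℝ β m) :
    HasFDerivAt (fun p => A p *ᵥ β p) (ContinuousLinearMap.pi fun i =>
      ∑ j, (A m i j • fderiv ℝ (fun p => β p j) m + β m j • fderiv ℝ (fun p => A p i j) m)) m := by
  refine hasFDerivAt_pi.2 fun i => ?_
  simp only [mulVec, dotProduct]
  exact HasFDerivAt.fun_sum fun j _ =>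
    (hA i j).hasFDerivAt.mul (differentiableAt_pi.1 hβ j).hasFDerivAt

lemma fderiv_mulVec_apply {A : (Fin n → ℝ) → Matrix (Fin n) (Fin n) ℝ}
    {β : (Fin n → ℝ) → (Fin n → ℝ)} (hA : ∀ i j, DifferentiableAt ℝ (fun p => A p i j) m)
    (hβ : DifferentiableAt ℝ β m) (v : Fin n → ℝ) :
    fderiv ℝ (fun p => A p *ᵥ β p) m v
      = (of fun i j => fderiv ℝ (fun p => A p i j) m v) *ᵥ β m + A m *ᵥ fderiv ℝ β m v := by
  ext i
  simp [(hasFDerivAt_mulVec hA hβ).fderiv, fderiv_apply hβ, mulVec, dotProduct,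
    Finset.sum_add_distrib, mul_comm, add_comm]

lemma lieBracketVF_mulVec {X β : (Fin n → ℝ) → (Fin n → ℝ)}
    {A : (Fin n → ℝ) → Matrix (Fin n) (Fin n) ℝ} (hX : DifferentiableAt ℝ X m)
    (hA : ∀ i j, DifferentiableAt ℝ (fun p => A p i j) m) (hβ : DifferentiableAt ℝ β m) :
    lieBracketVF X (fun p => A p *ᵥ β p) m
      = lieDerivBiv X A m *ᵥ β m + A m *ᵥ lieDerivForm X β m := by
  simp only [lieBracketVF, lieDerivBiv, lieDerivForm, fderiv_mulVec_apply hA hβ,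
    fderiv_apply_eq_jacobianM_mulVec hX, sub_mulVec, mulVec_add, mulVec_mulVec]
  abel

lemma jacobianM_mulVec {A : (Fin n → ℝ) → Matrix (Fin n) (Fin n) ℝ}
    {α : (Fin n → ℝ) → (Fin n → ℝ)} (hA : ∀ i j, DifferentiableAt ℝ (fun p => A p i j) m)
    (hα : DifferentiableAt ℝ α m) :
    jacobianM (fun p => A p *ᵥ α p) m
      = ∑ j, α m j • jacobianM (fun p i => A p i j) m + A m * jacobianM α m := by
  ext i l
  have hAα := (hasFDerivAt_mulVec hA hα).differentiableAt
  simp only [jacobianM, of_apply]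
  rw [fderiv_apply hAα, ContinuousLinearMap.comp_apply, ContinuousLinearMap.proj_apply,
    fderiv_mulVec_apply hA hα]
  simp [fderiv_apply hα, mulVec, dotProduct, Matrix.sum_apply, mul_apply, mul_comm]

lemma lieDerivBiv_mulVec {A π : (Fin n → ℝ) → Matrix (Fin n) (Fin n) ℝ}
    {α : (Fin n → ℝ) → (Fin n → ℝ)} (hA : ∀ i j, DifferentiableAt ℝ (fun p => A p i j) m)
    (hα : DifferentiableAt ℝ α m) :
    lieDerivBiv (fun p => A p *ᵥ α p) π m
      = ∑ j, α m j • lieDerivBiv (fun p i => A p i j) π m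
        - A m * jacobianM α m * π m - π m * (A m * jacobianM α m)ᵀ := by
  have hdir : (of fun i k => fderiv ℝ (fun p => π p i k) m (A m *ᵥ α m))
      = ∑ j, α m j • of fun i k => fderiv ℝ (fun p => π p i k) m (fun i => A m i j) := by
    ext i k
    rw [mulVec_eq_sum]
    simp [Matrix.sum_apply]
    rfl
  simp only [lieDerivBiv, jacobianM_mulVec hA hα, hdir, add_mul, mul_add, transpose_add,
    Finset.sum_mul, Finset.mul_sum, transpose_sum, smul_sub, Finset.sum_sub_distrib, smul_mul,
    Matrix.mul_smul, transpose_smul]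
  abel

lemma ham_coord (π : (Fin n → ℝ) → Matrix (Fin n) (Fin n) ℝ) (j : Fin n) :
    ham π (fun p => p j) = fun p i => π p i j := by
  funext p i
  simp [ham, gradf, mulVec, dotProduct, (hasFDerivAt_apply j p).fderiv, Pi.single_apply]

lemma lieDerivBiv_mulVec_mulVec {π : (Fin n → ℝ) → Matrix (Fin n) (Fin n) ℝ}
    {α : (Fin n → ℝ) → (Fin n → ℝ)} (hπ : ∀ i j, DifferentiableAt ℝ (fun p => π p i j) m)
    (hα : DifferentiableAt ℝ α m) (v : Fin n → ℝ) :
    lieDerivBiv (fun p => π p *ᵥ α p) π m *ᵥ v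
      = ∑ j, α m j • (lieDerivBiv (ham π fun p => p j) π m *ᵥ v)
        - π m *ᵥ (jacobianM α m *ᵥ (π m *ᵥ v) + (jacobianM α m)ᵀ *ᵥ ((π m)ᵀ *ᵥ v)) := by
  simp only [ham_coord, lieDerivBiv_mulVec hπ hα, sub_mulVec, sum_mulVec, smul_mulVec,
    mulVec_mulVec, transpose_mul, mulVec_add, Matrix.mul_assoc]
  abel

lemma contDiff_mulVec {k : WithTop ℕ∞} {A : (Fin n → ℝ) → Matrix (Fin n) (Fin n) ℝ}
    {v : (Fin n → ℝ) → (Fin n → ℝ)} (hA : ∀ i j, ContDiff ℝ k fun p => A p i j)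
    (hv : ContDiff ℝ k v) : ContDiff ℝ k fun p => A p *ᵥ v p :=
  contDiff_pi.2 fun i => by
    simpa only [mulVec, dotProduct] using
      ContDiff.sum fun j _ => (hA i j).mul (contDiff_pi.1 hv j)

lemma contDiff_jacobianM_apply {X : (Fin n → ℝ) → (Fin n → ℝ)} (hX : ContDiff ℝ ∞ X)
    (i l : Fin n) : ContDiff ℝ ∞ fun p => jacobianM X p i l :=
  ((contDiff_pi.1 hX i).fderiv_right le_rfl).clm_apply contDiff_const

lemma contDiff_gradf {H : (Fin n → ℝ) → ℝ} (hH : ContDiff ℝ ∞ H) : ContDiff ℝ ∞ (gradf H) :=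
  contDiff_pi.2 fun _ => (hH.fderiv_right le_rfl).clm_apply contDiff_const

lemma contDiff_lieDerivForm {X β : (Fin n → ℝ) → (Fin n → ℝ)} (hX : ContDiff ℝ ∞ X)
    (hβ : ContDiff ℝ ∞ β) : ContDiff ℝ ∞ (lieDerivForm X β) :=
  ((hβ.fderiv_right le_rfl).clm_apply hX).add
    (contDiff_mulVec (fun i l => contDiff_jacobianM_apply hX l i) hβ)

end

theorem foliated_iff_lie_derivative_image_general {n : ℕ}
    (π : (Fin n → ℝ) → Matrix (Fin n) (Fin n) ℝ)
    (hs : SmoothBiv π) :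
    Foliated π ↔
      ∀ H : (Fin n → ℝ) → ℝ, ContDiff ℝ (⊤ : ℕ∞) H →
        ∀ α : (Fin n → ℝ) → (Fin n → ℝ), ContDiff ℝ (⊤ : ℕ∞) α →
          ∃ β : (Fin n → ℝ) → (Fin n → ℝ), ContDiff ℝ (⊤ : ℕ∞) β ∧
            ∀ m, lieDerivBiv (ham π H) π m *ᵥ α m = π m *ᵥ β m := by
  have hπ : ∀ m i j, DifferentiableAt ℝ (fun p => π p i j) m := fun m i j =>
    (hs i j).differentiable (by simp) m
  have hd : ∀ {f : (Fin n → ℝ) → (Fin n → ℝ)}, ContDiff ℝ ∞ f → ∀ m, DifferentiableAt ℝ f m :=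
    fun hf m => hf.differentiable (by simp) m
  have hπα : ∀ {α}, ContDiff ℝ ∞ α → ContDiff ℝ ∞ fun p => π p *ᵥ α p := contDiff_mulVec hs
  constructor
  · intro hF H hH α hα
    have hX : ContDiff ℝ ∞ (ham π H) := hπα (contDiff_gradf hH)
    obtain ⟨γ, hγ, hbracket⟩ := hF (gradf H) α (contDiff_gradf hH) hα
    refine ⟨γ - lieDerivForm (ham π H) α, hγ.sub (contDiff_lieDerivForm hX hα), fun m => ?_⟩
    rw [Pi.sub_apply, mulVec_sub, ← hbracket m]
    exact eq_sub_of_add_eq (lieBracketVF_mulVec (hd hX m) (hπ m) (hd hα m)).symm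
  · intro hL α β hα hβ
    choose B hB hLB using fun j => hL (fun p => p j) (contDiff_apply ℝ ℝ j) β hβ
    have hJα := contDiff_jacobianM_apply hα
    refine ⟨fun m => ∑ j, α m j • B j m
        - (jacobianM α m *ᵥ (π m *ᵥ β m) + (jacobianM α m)ᵀ *ᵥ ((π m)ᵀ *ᵥ β m))
        + lieDerivForm (fun p => π p *ᵥ α p) β m, ?_, fun m => ?_⟩
    · exact ((ContDiff.sum fun j _ => (contDiff_pi.1 hα j).smul (hB j)).sub
        ((contDiff_mulVec hJα (hπα hβ)).add (contDiff_mulVec (fun i l => hJα l i)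
          (contDiff_mulVec (fun i j => hs j i) hβ)))).add (contDiff_lieDerivForm (hπα hα) hβ)
    · rw [lieBracketVF_mulVec (hd (hπα hα) m) (hπ m) (hd hβ m),
        lieDerivBiv_mulVec_mulVec (hπ m) (hd hα m)]
      simp only [hLB, mulVec_add, mulVec_sub, mulVec_sum, mulVec_smul]

theorem foliated_iff_lie_derivative_image {n : ℕ}
    (π : (Fin n → ℝ) → Matrix (Fin n) (Fin n) ℝ)
    (hs : SmoothBiv π) (ha : AntiSymmBiv π) :
    Foliated π ↔
      ∀ H : (Fin n → ℝ) → ℝ, ContDiff ℝ (⊤ : ℕ∞) H →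
        ∀ α : (Fin n → ℝ) → (Fin n → ℝ), ContDiff ℝ (⊤ : ℕ∞) α →
          ∃ β : (Fin n → ℝ) → (Fin n → ℝ), ContDiff ℝ (⊤ : ℕ∞) β ∧
            ∀ m, lieDerivBiv (ham π H) π m *ᵥ α m = π m *ᵥ β m :=
  foliated_iff_lie_derivative_image_general π hs
end

section
/- On M = ℝ⁴ with coordinates (x, y, u, v), the bivector field π = x ∂/∂x ∧ ∂/∂u + (x²+y²) ∂/∂y ∧ ∂/∂v is weakly foliated but not foliated: at each point with (x,y) ≠ (0,0), [π^#(du), π^#(dv)] = π^#(β) for the unique 1-form β = (2x²/(x²+y²)) dv, which does not extend smoothly to points with (x,y) = (0,0), yet at every point m the bracket [π^#(α), π^#(β)]|_m lies in Im(π_m^#). -/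
open Matrix

noncomputable def pi10 (m : Fin 4 → ℝ) : Matrix (Fin 4) (Fin 4) ℝ :=
  !![0, 0, m 0, 0;
     0, 0, 0, m 0 ^ 2 + m 1 ^ 2;
     -(m 0), 0, 0, 0;
     0, -(m 0 ^ 2 + m 1 ^ 2), 0, 0]

noncomputable def beta10 (m : Fin 4 → ℝ) : Fin 4 → ℝ :=
  fun i => if i = 3 then 2 * m 0 ^ 2 / (m 0 ^ 2 + m 1 ^ 2) else 0

/-!
Write `s = x² + y²`. Then `π^#(α) = (x α_u, s α_v, -x α_x, -s α_y)`. Where `x ≠ 0` the matrix `π`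
is invertible. On the hyperplane `x = 0` with `y ≠ 0` the image of `π^#` is spanned by `∂_y, ∂_v`,
and since the `∂_x`- and `∂_u`-components of every `π^#(α)` are multiples of `x`, all these fields
are tangent to the hyperplane, hence so are their brackets. Where `x = y = 0` both fields vanish,
and so does their bracket. On the other hand `[π^#(du), π^#(dv)] = [x ∂_x, s ∂_y] = 2x² ∂_y`, so
any `γ` with `π^#(γ)` equal to this bracket has `γ_v = 2x²/(x² + y²)` away from `x = y = 0`: this
is `2` on the `x`-axis and `0` on the `y`-axis, so `γ` cannot be continuous at the origin.
-/

section LieBracket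

variable {n : ℕ} {X Y : (Fin n → ℝ) → (Fin n → ℝ)} {m : Fin n → ℝ}

theorem lieBracketVF_apply (hX : DifferentiableAt ℝ X m) (hY : DifferentiableAt ℝ Y m)
    (i : Fin n) :
    lieBracketVF X Y m i
      = fderiv ℝ (fun p => Y p i) m (X m) - fderiv ℝ (fun p => X p i) m (Y m) := by
  simp [lieBracketVF, fderiv_apply hX, fderiv_apply hY]

theorem lieBracketVF_eq_zero_of_eq_zero (hX : X m = 0) (hY : Y m = 0) :
    lieBracketVF X Y m = 0 := by
  simp [lieBracketVF, hX, hY]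

theorem lieBracketVF_apply_eq_zero_of_mul_coord {i k : Fin n} {a b : (Fin n → ℝ) → ℝ}
    (hX : DifferentiableAt ℝ X m) (hY : DifferentiableAt ℝ Y m)
    (ha : DifferentiableAt ℝ a m) (hb : DifferentiableAt ℝ b m)
    (hXi : ∀ p, X p i = p k * a p) (hYi : ∀ p, Y p i = p k * b p)
    (hm : m k = 0) (hXk : X m k = 0) (hYk : Y m k = 0) :
    lieBracketVF X Y m i = 0 := by
  simp only [lieBracketVF_apply hX hY, hXi, hYi]
  rw [fderiv_fun_mul (differentiableAt_apply k m) ha,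
    fderiv_fun_mul (differentiableAt_apply k m) hb]
  simp [(hasFDerivAt_apply k m).fderiv, hm, hXk, hYk]

end LieBracket

theorem sq_add_sq_ne_zero_of_or {a b : ℝ} (h : a ≠ 0 ∨ b ≠ 0) : a ^ 2 + b ^ 2 ≠ 0 := by
  rcases h with h | h <;> positivity

theorem SmoothBiv.contDiff_mulVec {n : ℕ} {π : (Fin n → ℝ) → Matrix (Fin n) (Fin n) ℝ}
    (hπ : SmoothBiv π) {α : (Fin n → ℝ) → (Fin n → ℝ)} (hα : ContDiff ℝ (⊤ : ℕ∞) α) :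
    ContDiff ℝ (⊤ : ℕ∞) fun p => π p *ᵥ α p :=
  contDiff_pi.2 fun i => by
    simpa only [mulVec, dotProduct] using
      ContDiff.sum fun j _ => (hπ i j).mul (contDiff_pi.1 hα j)

theorem pi10_mulVec (m ξ : Fin 4 → ℝ) :
    pi10 m *ᵥ ξ = ![m 0 * ξ 2, (m 0 ^ 2 + m 1 ^ 2) * ξ 3, -(m 0 * ξ 0),
      -((m 0 ^ 2 + m 1 ^ 2) * ξ 1)] := by
  ext i
  fin_cases i <;> simp [pi10, mulVec, dotProduct, Fin.sum_univ_four]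
  ring

theorem smoothBiv_pi10 : SmoothBiv pi10 := by
  intro i j
  fin_cases i <;> fin_cases j <;> (simp [pi10]; try fun_prop)

theorem pi10_eq_zero {m : Fin 4 → ℝ} (h0 : m 0 = 0) (h1 : m 1 = 0) : pi10 m = 0 := by
  ext i j
  fin_cases i <;> fin_cases j <;> simp [pi10, h0, h1]

theorem lieBracketVF_pi10_du_dv (m : Fin 4 → ℝ) :
    lieBracketVF (fun p => pi10 p *ᵥ Pi.single 2 1) (fun p => pi10 p *ᵥ Pi.single 3 1) m
      = ![0, 2 * m 0 ^ 2, 0, 0] := by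
  have hX (p : Fin 4 → ℝ) : pi10 p *ᵥ Pi.single 2 1 = ![p 0, 0, 0, 0] := by
    rw [pi10_mulVec]; simp
  have hY (p : Fin 4 → ℝ) : pi10 p *ᵥ Pi.single 3 1 = ![0, p 0 ^ 2 + p 1 ^ 2, 0, 0] := by
    rw [pi10_mulVec]; simp
  ext i
  rw [lieBracketVF_apply ((smoothBiv_pi10.contDiff_mulVec contDiff_const).differentiable
    (by simp) m) ((smoothBiv_pi10.contDiff_mulVec contDiff_const).differentiable (by simp) m)]
  simp only [hX, hY]
  fin_cases i
  · simp [(hasFDerivAt_apply _ m).fderiv]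
  · simp only [Fin.mk_one, cons_val_one, cons_val_zero]
    rw [fderiv_fun_add (by fun_prop) (by fun_prop), fderiv_fun_pow _ (by fun_prop),
      fderiv_fun_pow _ (by fun_prop)]
    simp [(hasFDerivAt_apply _ m).fderiv]
    ring
  · simp
  · simp

theorem exists_pi10_mulVec_eq {m w : Fin 4 → ℝ} (hs : m 0 ^ 2 + m 1 ^ 2 ≠ 0)
    (hw : m 0 = 0 → w 0 = 0 ∧ w 2 = 0) : ∃ ξ, w = pi10 m *ᵥ ξ := by
  -- when `m 0 = 0` the junk value `w i / 0 = 0` is the right coefficient, as `w 0 = w 2 = 0`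
  refine ⟨![-w 2 / m 0, -w 3 / (m 0 ^ 2 + m 1 ^ 2), w 0 / m 0, w 1 / (m 0 ^ 2 + m 1 ^ 2)], ?_⟩
  have h0 : m 0 * (w 0 / m 0) = w 0 := mul_div_cancel_of_imp' fun h => (hw h).1
  have h2 : m 0 * (w 2 / m 0) = w 2 := mul_div_cancel_of_imp' fun h => (hw h).2
  rw [pi10_mulVec]
  ext i
  fin_cases i <;> simp [neg_div, mul_div_cancel₀ _ hs, h0, h2]

theorem pi10_mulVec_injective {m : Fin 4 → ℝ} (h : m 0 ≠ 0) :
    Function.Injective (pi10 m *ᵥ ·) := by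
  have hs : m 0 ^ 2 + m 1 ^ 2 ≠ 0 := by positivity
  intro ξ η hξη
  simp only [pi10_mulVec] at hξη
  have := congrFun hξη
  ext i
  fin_cases i
  · simpa [h] using this 2
  · simpa [hs] using this 3
  · simpa [h] using this 0
  · simpa [hs] using this 1

theorem weaklyFoliated_pi10 : WeaklyFoliated pi10 := by
  intro α β hα hβ m
  by_cases h01 : m 0 = 0 ∧ m 1 = 0
  · have hπ := pi10_eq_zero h01.1 h01.2
    refine ⟨0, ?_⟩
    rw [lieBracketVF_eq_zero_of_eq_zero (by simp [hπ]) (by simp [hπ]), mulVec_zero]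
  have hX := (smoothBiv_pi10.contDiff_mulVec hα).differentiable (by simp) m
  have hY := (smoothBiv_pi10.contDiff_mulVec hβ).differentiable (by simp) m
  have hα' (i : Fin 4) := (contDiff_pi.1 hα i).differentiable (by simp) m
  have hβ' (i : Fin 4) := (contDiff_pi.1 hβ i).differentiable (by simp) m
  refine exists_pi10_mulVec_eq (sq_add_sq_ne_zero_of_or (not_and_or.1 h01)) fun h0 => ⟨?_, ?_⟩
  · exact lieBracketVF_apply_eq_zero_of_mul_coord hX hY (hα' 2) (hβ' 2)
      (fun p => by simp [pi10_mulVec]) (fun p => by simp [pi10_mulVec]) h0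
      (by simp [pi10_mulVec, h0]) (by simp [pi10_mulVec, h0])
  · exact lieBracketVF_apply_eq_zero_of_mul_coord hX hY (hα' 0).neg (hβ' 0).neg
      (fun p => by simp [pi10_mulVec]) (fun p => by simp [pi10_mulVec]) h0
      (by simp [pi10_mulVec, h0]) (by simp [pi10_mulVec, h0])

theorem lieBracketVF_pi10_du_dv_eq_mulVec_beta10 {m : Fin 4 → ℝ} (h : m 0 ≠ 0 ∨ m 1 ≠ 0) :
    lieBracketVF (fun p => pi10 p *ᵥ Pi.single 2 1) (fun p => pi10 p *ᵥ Pi.single 3 1) m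
      = pi10 m *ᵥ beta10 m := by
  rw [lieBracketVF_pi10_du_dv, pi10_mulVec]
  simp [beta10, mul_div_cancel₀ _ (sq_add_sq_ne_zero_of_or h)]

theorem eq_beta10_of_lieBracketVF_pi10_du_dv_eq {m ξ : Fin 4 → ℝ} (h : m 0 ≠ 0)
    (hξ : lieBracketVF (fun p => pi10 p *ᵥ Pi.single 2 1)
      (fun p => pi10 p *ᵥ Pi.single 3 1) m = pi10 m *ᵥ ξ) :
    ξ = beta10 m :=
  pi10_mulVec_injective h <| hξ.symm.trans (lieBracketVF_pi10_du_dv_eq_mulVec_beta10 (.inl h))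

theorem not_exists_continuous_extension_beta10 :
    ¬ ∃ g : (Fin 4 → ℝ) → ℝ, Continuous g ∧
      ∀ m : Fin 4 → ℝ, (m 0 ≠ 0 ∨ m 1 ≠ 0) → g m = beta10 m 3 := by
  rintro ⟨g, hg, hgβ⟩
  have value_at_zero (k : Fin 4) (c : ℝ) (hc : ∀ t : ℝ, t ≠ 0 → g (t • Pi.single k 1) = c) :
      g 0 = c := by
    simpa using congrFun (Continuous.ext_on (dense_compl_singleton (0 : ℝ)) (by fun_prop)
      continuous_const hc) 0
  have on_x_axis : g 0 = 2 := value_at_zero 0 2 fun t ht => by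
    rw [hgβ _ (.inl (by simpa using ht))]
    simp [beta10, ht]
  have on_y_axis : g 0 = 0 := value_at_zero 1 0 fun t ht => by
    rw [hgβ _ (.inr (by simpa using ht))]
    simp [beta10]
  norm_num [on_x_axis] at on_y_axis

theorem not_foliated_pi10 : ¬ Foliated pi10 := by
  intro h
  obtain ⟨γ, hγ, hbracket⟩ := h _ _ contDiff_const contDiff_const
  refine not_exists_continuous_extension_beta10
    ⟨fun m => γ m 3, (continuous_apply 3).comp hγ.continuous, fun m hm => ?_⟩
  have hs := sq_add_sq_ne_zero_of_or hm
  have h1 := congrFun ((hbracket m).symm.trans (lieBracketVF_pi10_du_dv_eq_mulVec_beta10 hm)) 1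
  simpa [pi10_mulVec, hs] using h1

theorem weakly_foliated_not_foliated_example :
    WeaklyFoliated pi10 ∧ ¬ Foliated pi10 ∧
    (∀ m : Fin 4 → ℝ, (m 0 ≠ 0 ∨ m 1 ≠ 0) →
      lieBracketVF (fun p => pi10 p *ᵥ Pi.single 2 1) (fun p => pi10 p *ᵥ Pi.single 3 1) m
        = pi10 m *ᵥ beta10 m) ∧
    (∀ m : Fin 4 → ℝ, m 0 ≠ 0 → ∀ ξ : Fin 4 → ℝ,
      lieBracketVF (fun p => pi10 p *ᵥ Pi.single 2 1) (fun p => pi10 p *ᵥ Pi.single 3 1) m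
        = pi10 m *ᵥ ξ → ξ = beta10 m) :=
  ⟨weaklyFoliated_pi10, not_foliated_pi10, fun _ => lieBracketVF_pi10_du_dv_eq_mulVec_beta10,
    fun _ h _ => eq_beta10_of_lieBracketVF_pi10_du_dv_eq h⟩
end

section
/- Let π be a Poisson bivector on M, H ∈ C^∞(M), ∇ a torsion-free connection, K^H(u) = ∇_u X_H, and α(t) a path in T*M with base path x(t) satisfying the stationarity equations ∇_{ẋ(t)} α = −(K^H_{x(t)})*(α(t)) and ẋ(t) = X_H(x(t)). Then c(t) := π^#_{x(t)}(α(t)) − ẋ(t) satisfies the linear ODE ∇_{ẋ(t)} c = K^H_{x(t)}(c(t)); in particular, since L_{X_H}π = 0, if c(0) = 0 then c ≡ 0, i.e. α is a cotangent path for π. -/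
/-!
In coordinates `∇_ẋ c = ċ + Γ(ẋ, c)` and `K^H = J + Γ(·, X)`, where `J` is the Jacobian of
`X = π♯ dH`. By the symmetry of `Γ` the Christoffel terms cancel: the stationarity equation reads
`α' = -Jᵀ α` and the claimed equation reads `c' = J c`. Differentiating `c = π(x) α - X(x)` gives
`c' = J c + (L_X π) α`, and `L_X π = 0`: writing `J = A + π · Hess H`, where `A` differentiates
only the factor `π` of `π♯ dH`, the Hessian terms cancel by the antisymmetry of `π`, and what is
left is the Jacobi identity `[π, π] = 0` contracted with `dH`.
Finally `c' = J c` is a linear ODE with continuous coefficients, so `c(0) = 0` forces `c ≡ 0`.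
-/

open Matrix

noncomputable def KH {n : ℕ} (π : (Fin n → ℝ) → Matrix (Fin n) (Fin n) ℝ)
    (Γ : (Fin n → ℝ) → (Fin n → ℝ) →ₗ[ℝ] (Fin n → ℝ) →ₗ[ℝ] (Fin n → ℝ))
    (H : (Fin n → ℝ) → ℝ) (m : Fin n → ℝ) : Matrix (Fin n) (Fin n) ℝ :=
  Matrix.of fun i l =>
    fderiv ℝ (fun p => ham π H p i) m (Pi.single l 1)
      + Γ m (Pi.single l 1) (ham π H m) i

theorem mul_add_mul_transpose_of_transpose_eq {ι R : Type*} [Fintype ι] [CommRing R]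
    {A P S : Matrix ι ι R} (hP : Pᵀ = -P) (hS : Sᵀ = S) :
    (A + P * S) * P + P * (A + P * S)ᵀ = A * P + P * Aᵀ := by
  simp only [transpose_add, transpose_mul, hP, hS, add_mul, mul_add, Matrix.mul_neg,
    Matrix.mul_assoc]
  abel

theorem hasDerivAt_mulVec {ι κ : Type*} [Fintype ι] [Fintype κ] {P : ℝ → Matrix ι κ ℝ}
    {P' : Matrix ι κ ℝ} {v : ℝ → κ → ℝ} {v' : κ → ℝ} {t : ℝ}
    (hP : ∀ i j, HasDerivAt (fun s => P s i j) (P' i j) t) (hv : HasDerivAt v v' t) :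
    HasDerivAt (fun s => P s *ᵥ v s) (P' *ᵥ v t + P t *ᵥ v') t := by
  refine hasDerivAt_pi.2 fun i => ?_
  simp only [mulVec, dotProduct, Pi.add_apply, ← Finset.sum_add_distrib]
  exact HasDerivAt.fun_sum fun j _ => ((hP i j).mul (hasDerivAt_pi.1 hv j)).congr_deriv (by ring)

theorem eq_zero_of_hasDerivAt_clm_apply {E : Type*} [NormedAddCommGroup E] [NormedSpace ℝ E]
    {A : ℝ → E →L[ℝ] E} (hA : Continuous A) {c : ℝ → E}
    (hc : ∀ t, HasDerivAt c (A t (c t)) t) {t₀ : ℝ} (h₀ : c t₀ = 0) (t : ℝ) : c t = 0 := by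
  set R := |t| + |t₀| + 1
  obtain ⟨C, hC⟩ := (isCompact_Icc (a := -R) (b := R)).exists_bound_of_continuousOn
    hA.continuousOn
  have hlip : ∀ s ∈ Set.Ioo (-R) R, LipschitzOnWith C.toNNReal (A s) Set.univ := fun s hs =>
    (ContinuousLinearMap.lipschitzWith_of_opNorm_le
      ((hC s (Set.Ioo_subset_Icc_self hs)).trans (Real.le_coe_toNNReal C))).lipschitzOnWith
  have hmem : ∀ τ, |τ| < R → τ ∈ Set.Ioo (-R) R := fun τ hτ => abs_lt.1 hτ
  refine ODE_solution_unique_of_mem_Ioo hlip (hmem t₀ (by linarith [abs_nonneg t]))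
    (fun s _ => ⟨hc s, Set.mem_univ _⟩)
    (fun s _ => ⟨(hasDerivAt_const s 0).congr_deriv (map_zero (A s)).symm, Set.mem_univ _⟩)
    h₀ (hmem t (by linarith [abs_nonneg t₀]))

section Coordinates

variable {n : ℕ}

theorem fderiv_apply_eq_sum_pd (f : (Fin n → ℝ) → ℝ) (m v : Fin n → ℝ) :
    fderiv ℝ f m v = ∑ k, v k * pd f k m := by
  conv_lhs => rw [pi_eq_sum_univ' v]
  simp [pd]

theorem jacobianM_mulVec_s17 {X : (Fin n → ℝ) → Fin n → ℝ} {m : Fin n → ℝ}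
    (hX : DifferentiableAt ℝ X m) (v : Fin n → ℝ) :
    jacobianM X m *ᵥ v = fderiv ℝ X m v := by
  ext i
  have hXi : fderiv ℝ X m v i = fderiv ℝ (fun p => X p i) m v := by
    rw [fderiv_apply hX i]; rfl
  rw [hXi, fderiv_apply_eq_sum_pd]
  simp only [mulVec, dotProduct, jacobianM, of_apply, pd, mul_comm]

theorem jacobianM_mulVec_const_apply {P : (Fin n → ℝ) → Matrix (Fin n) (Fin n) ℝ}
    {m : Fin n → ℝ} (hP : ∀ i j, DifferentiableAt ℝ (fun p => P p i j) m)
    (g : Fin n → ℝ) (i k : Fin n) :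
    jacobianM (fun p => P p *ᵥ g) m i k = ∑ l, pd (fun p => P p i l) k m * g l := by
  simp only [jacobianM, of_apply, mulVec, dotProduct]
  rw [fderiv_fun_sum fun l _ => (hP i l).mul_const (g l)]
  simp [pd, fderiv_mul_const (hP _ _), mul_comm]

theorem jacobianM_mulVec_field {P : (Fin n → ℝ) → Matrix (Fin n) (Fin n) ℝ}
    {v : (Fin n → ℝ) → Fin n → ℝ} {m : Fin n → ℝ}
    (hP : ∀ i j, DifferentiableAt ℝ (fun p => P p i j) m)
    (hv : ∀ j, DifferentiableAt ℝ (fun p => v p j) m) :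
    jacobianM (fun p => P p *ᵥ v p) m
      = jacobianM (fun p => P p *ᵥ v m) m + P m * jacobianM v m := by
  ext i k
  rw [Matrix.add_apply, jacobianM_mulVec_const_apply hP]
  simp only [jacobianM, of_apply, mulVec, dotProduct, mul_apply]
  rw [fderiv_fun_sum fun l _ => (hP i l).fun_mul (hv l)]
  simp [fderiv_fun_mul (hP _ _) (hv _), pd, Finset.sum_add_distrib, mul_comm]
  exact add_comm _ _

theorem transpose_jacobianM_gradf {H : (Fin n → ℝ) → ℝ} {m : Fin n → ℝ}
    (hH : ContDiffAt ℝ 2 H m) : (jacobianM (gradf H) m)ᵀ = jacobianM (gradf H) m := by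
  have hd : DifferentiableAt ℝ (fderiv ℝ H) m :=
    (hH.fderiv_right (m := 1) le_rfl).differentiableAt one_ne_zero
  have hsymm : IsSymmSndFDerivAt ℝ H m :=
    hH.isSymmSndFDerivAt (by simp [minSmoothness_of_isRCLikeNormedField])
  have hentry : ∀ a b, jacobianM (gradf H) m a b
      = fderiv ℝ (fderiv ℝ H) m (Pi.single b 1) (Pi.single a 1) := by
    intro a b
    simp only [jacobianM, of_apply, gradf]
    rw [fderiv_clm_apply hd (differentiableAt_const _)]
    simp
  ext a b
  rw [transpose_apply, hentry, hentry, hsymm]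

theorem contDiff_ham {π : (Fin n → ℝ) → Matrix (Fin n) (Fin n) ℝ}
    {H : (Fin n → ℝ) → ℝ} {k : WithTop ℕ∞} (hπ : ∀ i j, ContDiff ℝ k fun p => π p i j)
    (hH : ContDiff ℝ (k + 1) H) : ContDiff ℝ k (ham π H) := by
  have hgrad : ∀ l, ContDiff ℝ k fun p => gradf H p l := fun l =>
    (hH.fderiv_right le_rfl).clm_apply contDiff_const
  refine contDiff_pi.2 fun i => ?_
  show ContDiff ℝ k fun p => ∑ l, π p i l * gradf H p l
  exact ContDiff.sum fun l _ => (hπ i l).mul (hgrad l)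

theorem hasDerivAt_mulVec_sub_of_integralCurve {π : (Fin n → ℝ) → Matrix (Fin n) (Fin n) ℝ}
    {X : (Fin n → ℝ) → Fin n → ℝ} {x α : ℝ → Fin n → ℝ} {t : ℝ}
    (hπ : ∀ i j, DifferentiableAt ℝ (fun p => π p i j) (x t))
    (hX : DifferentiableAt ℝ X (x t)) (hx : HasDerivAt x (X (x t)) t)
    (hα : HasDerivAt α (-(α t ᵥ* jacobianM X (x t))) t) :
    HasDerivAt (fun s => π (x s) *ᵥ α s - X (x s))
      (jacobianM X (x t) *ᵥ (π (x t) *ᵥ α t - X (x t)) + lieDerivBiv X π (x t) *ᵥ α t) t := by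
  have hπx : ∀ i j, HasDerivAt (fun s => π (x s) i j)
      (fderiv ℝ (fun p => π p i j) (x t) (X (x t))) t := fun i j =>
    (hπ i j).hasFDerivAt.comp_hasDerivAt t hx
  have hXx : HasDerivAt (fun s => X (x s)) (jacobianM X (x t) *ᵥ X (x t)) t := by
    rw [jacobianM_mulVec_s17 hX]
    exact hX.hasFDerivAt.comp_hasDerivAt t hx
  refine ((hasDerivAt_mulVec (P' := of fun i j => fderiv ℝ (fun p => π p i j) (x t) (X (x t)))
    hπx hα).sub hXx).congr_deriv ?_
  rw [lieDerivBiv, ← mulVec_transpose, mulVec_neg, mulVec_mulVec, mulVec_sub, sub_mulVec,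
    sub_mulVec, mulVec_mulVec]
  abel

end Coordinates

section Poisson

variable {n : ℕ} {π : (Fin n → ℝ) → Matrix (Fin n) (Fin n) ℝ}

theorem AntiSymmBiv.apply_swap (ha : AntiSymmBiv π) (m : Fin n → ℝ) (i j : Fin n) :
    π m j i = -π m i j := by
  simpa using congrFun (congrFun (ha m) i) j

theorem AntiSymmBiv.pd_swap (ha : AntiSymmBiv π) (m : Fin n → ℝ) (i j k : Fin n) :
    pd (fun p => π p j i) k m = -pd (fun p => π p i j) k m := by
  simp [pd, ha.apply_swap _ i j]

-- The Jacobi identity `[π, π] = 0` contracted with the covector `g`.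
theorem fderiv_bivector_mulVec_eq_of_schouten_eq_zero {m : Fin n → ℝ}
    (hπ : ∀ i j, DifferentiableAt ℝ (fun p => π p i j) m) (ha : AntiSymmBiv π)
    (hJac : ∀ i j k, schouten π m i j k = 0) (g : Fin n → ℝ) :
    (of fun i j => fderiv ℝ (fun p => π p i j) m (π m *ᵥ g))
      = jacobianM (fun p => π p *ᵥ g) m * π m + π m * (jacobianM (fun p => π p *ᵥ g) m)ᵀ := by
  have hcyc : ∀ i j l, ∑ k, π m k l * pd (fun p => π p i j) k m
      = ∑ k, (π m k j * pd (fun p => π p i l) k m + π m i k * pd (fun p => π p j l) k m) := by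
    intro i j l
    have h := hJac i j l
    simp only [schouten, ha.apply_swap m i, ha.pd_swap m i l, Finset.sum_add_distrib, neg_mul,
      mul_neg, Finset.sum_neg_distrib] at h
    simp only [Finset.sum_add_distrib]
    linear_combination h
  ext i j
  simp only [of_apply, Matrix.add_apply, mul_apply, transpose_apply,
    jacobianM_mulVec_const_apply hπ, fderiv_apply_eq_sum_pd, mulVec, dotProduct]
  calc _ = ∑ l, g l * ∑ k, π m k l * pd (fun p => π p i j) k m := by
        simp only [Finset.sum_mul, Finset.mul_sum]
        rw [Finset.sum_comm]
        exact Finset.sum_congr rfl fun _ _ => Finset.sum_congr rfl fun _ _ => by ring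
    _ = ∑ l, g l * ∑ k, (π m k j * pd (fun p => π p i l) k m
          + π m i k * pd (fun p => π p j l) k m) := by
        simp only [hcyc]
    _ = _ := by
        simp only [Finset.mul_sum, Finset.sum_mul, mul_add, Finset.sum_add_distrib]
        congr 1 <;> rw [Finset.sum_comm] <;>
          exact Finset.sum_congr rfl fun _ _ => Finset.sum_congr rfl fun _ _ => by ring

theorem lieDerivBiv_ham_eq_zero {H : (Fin n → ℝ) → ℝ} {m : Fin n → ℝ}
    (hπ : ∀ i j, DifferentiableAt ℝ (fun p => π p i j) m) (ha : AntiSymmBiv π)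
    (hJac : ∀ i j k, schouten π m i j k = 0) (hH : ContDiffAt ℝ 2 H m) :
    lieDerivBiv (ham π H) π m = 0 := by
  have hgrad : ∀ l, DifferentiableAt ℝ (fun p => gradf H p l) m := fun l =>
    ((hH.fderiv_right (m := 1) le_rfl).differentiableAt one_ne_zero).clm_apply
      (differentiableAt_const _)
  have hJ : jacobianM (ham π H) m
      = jacobianM (fun p => π p *ᵥ gradf H m) m + π m * jacobianM (gradf H) m :=
    jacobianM_mulVec_field hπ hgrad
  rw [lieDerivBiv, sub_sub, hJ, mul_add_mul_transpose_of_transpose_eq (ha m)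
    (transpose_jacobianM_gradf hH)]
  exact sub_eq_zero.2 (fderiv_bivector_mulVec_eq_of_schouten_eq_zero hπ ha hJac _)

end Poisson

section Connection

variable {n : ℕ} {π : (Fin n → ℝ) → Matrix (Fin n) (Fin n) ℝ}
  {Γ : (Fin n → ℝ) → (Fin n → ℝ) →ₗ[ℝ] (Fin n → ℝ) →ₗ[ℝ] (Fin n → ℝ)}
  {H : (Fin n → ℝ) → ℝ} {m : Fin n → ℝ}

theorem KH_eq_jacobianM_add_toMatrix' (hΓ : ∀ v w, Γ m v w = Γ m w v) :
    KH π Γ H m = jacobianM (ham π H) m + LinearMap.toMatrix' (Γ m (ham π H m)) := by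
  ext i l
  simp only [KH, jacobianM, Matrix.add_apply, of_apply, LinearMap.toMatrix'_apply,
    hΓ (Pi.single l 1)]

theorem KH_mulVec_sub_apply (hΓ : ∀ v w, Γ m v w = Γ m w v) (u : Fin n → ℝ) (i : Fin n) :
    (KH π Γ H m *ᵥ u) i - Γ m (ham π H m) u i = (jacobianM (ham π H) m *ᵥ u) i := by
  rw [KH_eq_jacobianM_add_toMatrix' hΓ, add_mulVec, LinearMap.toMatrix'_mulVec, Pi.add_apply,
    add_sub_cancel_right]

theorem sum_sub_sum_mul_KH (hΓ : ∀ v w, Γ m v w = Γ m w v) (a : Fin n → ℝ) (i : Fin n) :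
    ∑ j, Γ m (ham π H m) (Pi.single i 1) j * a j - ∑ j, a j * KH π Γ H m j i
      = -(a ᵥ* jacobianM (ham π H) m) i := by
  simp only [KH_eq_jacobianM_add_toMatrix' hΓ, vecMul, dotProduct, Matrix.add_apply,
    LinearMap.toMatrix'_apply, add_mul, Finset.sum_add_distrib, mul_comm (a _)]
  ring

end Connection

theorem stationary_points_are_cotangent_for_poisson_general {n : ℕ}
    (π : (Fin n → ℝ) → Matrix (Fin n) (Fin n) ℝ)
    (hs : SmoothBiv π) (ha : AntiSymmBiv π)
    (hpoisson : ∀ m i j k, schouten π m i j k = 0)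
    (Γ : (Fin n → ℝ) → (Fin n → ℝ) →ₗ[ℝ] (Fin n → ℝ) →ₗ[ℝ] (Fin n → ℝ))
    (hΓsym : ∀ m v w, Γ m v w = Γ m w v)
    (H : (Fin n → ℝ) → ℝ) (hH : ContDiff ℝ (⊤ : ℕ∞) H)
    (x α : ℝ → (Fin n → ℝ))
    (hx : ∀ t, HasDerivAt x (ham π H (x t)) t)
    (hα : ∀ t i, HasDerivAt (fun s => α s i)
      (∑ j, Γ (x t) (ham π H (x t)) (Pi.single i 1) j * α t j
        - ∑ j, α t j * KH π Γ H (x t) j i) t) :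
    (∀ t i, HasDerivAt (fun s => (π (x s) *ᵥ α s - ham π H (x s)) i)
        ((KH π Γ H (x t) *ᵥ (π (x t) *ᵥ α t - ham π H (x t))) i
          - Γ (x t) (ham π H (x t)) (π (x t) *ᵥ α t - ham π H (x t)) i) t) ∧
    (π (x 0) *ᵥ α 0 - ham π H (x 0) = 0 →
      ∀ t, π (x t) *ᵥ α t - ham π H (x t) = 0) := by
  have hπ : ∀ i j, ContDiff ℝ 1 fun p => π p i j := fun i j =>
    (hs i j).of_le (by exact_mod_cast le_top)
  have hH2 : ContDiff ℝ (1 + 1) H := hH.of_le (WithTop.coe_le_coe.2 le_top)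
  have hX : ContDiff ℝ 1 (ham π H) := contDiff_ham hπ hH2
  have hπd : ∀ m i j, DifferentiableAt ℝ (fun p => π p i j) m := fun m i j =>
    (hπ i j).differentiable one_ne_zero m
  have hXd : ∀ m, DifferentiableAt ℝ (ham π H) m := fun m => hX.differentiable one_ne_zero m
  have hαJ : ∀ t, HasDerivAt α (-(α t ᵥ* jacobianM (ham π H) (x t))) t := fun t =>
    hasDerivAt_pi.2 fun i => (hα t i).congr_deriv (sum_sub_sum_mul_KH (hΓsym _) _ i)
  have hc : ∀ t, HasDerivAt (fun s => π (x s) *ᵥ α s - ham π H (x s))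
      (fderiv ℝ (ham π H) (x t) (π (x t) *ᵥ α t - ham π H (x t))) t := fun t => by
    simpa [lieDerivBiv_ham_eq_zero (hπd (x t)) ha (hpoisson (x t)) hH2.contDiffAt,
      jacobianM_mulVec_s17 (hXd (x t))] using
      hasDerivAt_mulVec_sub_of_integralCurve (hπd (x t)) (hXd (x t)) (hx t) (hαJ t)
  refine ⟨fun t i => ?_, fun h₀ t => ?_⟩
  · rw [KH_mulVec_sub_apply (hΓsym _), jacobianM_mulVec_s17 (hXd _)]
    exact hasDerivAt_pi.1 (hc t) i
  · have hxc : Continuous x := continuous_iff_continuousAt.2 fun t => (hx t).continuousAt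
    exact eq_zero_of_hasDerivAt_clm_apply ((hX.continuous_fderiv one_ne_zero).comp hxc) hc h₀ t

theorem stationary_points_are_cotangent_for_poisson {n : ℕ}
    (π : (Fin n → ℝ) → Matrix (Fin n) (Fin n) ℝ)
    (hs : SmoothBiv π) (ha : AntiSymmBiv π)
    (hpoisson : ∀ m i j k, schouten π m i j k = 0)
    (Γ : (Fin n → ℝ) → (Fin n → ℝ) →ₗ[ℝ] (Fin n → ℝ) →ₗ[ℝ] (Fin n → ℝ))
    (hΓs : ∀ v w, ContDiff ℝ (⊤ : ℕ∞) fun m => Γ m v w)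
    (hΓsym : ∀ m v w, Γ m v w = Γ m w v)
    (H : (Fin n → ℝ) → ℝ) (hH : ContDiff ℝ (⊤ : ℕ∞) H)
    (x α : ℝ → (Fin n → ℝ))
    (hx : ∀ t, HasDerivAt x (ham π H (x t)) t)
    (hα : ∀ t i, HasDerivAt (fun s => α s i)
      (∑ j, Γ (x t) (ham π H (x t)) (Pi.single i 1) j * α t j
        - ∑ j, α t j * KH π Γ H (x t) j i) t) :
    (∀ t i, HasDerivAt (fun s => (π (x s) *ᵥ α s - ham π H (x s)) i)
        ((KH π Γ H (x t) *ᵥ (π (x t) *ᵥ α t - ham π H (x t))) i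
          - Γ (x t) (ham π H (x t)) (π (x t) *ᵥ α t - ham π H (x t)) i) t) ∧
    (π (x 0) *ᵥ α 0 - ham π H (x 0) = 0 →
      ∀ t, π (x t) *ᵥ α t - ham π H (x t) = 0) :=
  stationary_points_are_cotangent_for_poisson_general π hs ha hpoisson Γ hΓsym H hH x α hx hα
end
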